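/- Roytenberg–Weinstein Jacobiator identity: let k be a field of characteristic zero, and let (E, ⟨·,·⟩, ρ, [·,·], D) be a Courant algebroid over a commutative k-algebra O, with separating pairing and with E a faithful O-module. Define the antisymmetrized (Courant) bracket ⟦u,v⟧ := [u,v] − (1/2)•D⟨u,v⟩. Then for all u, v, w ∈ E: ⟦⟦u,v⟧,w⟧ + ⟦⟦v,w⟧,u⟧ + ⟦⟦w,u⟧,v⟧ = D( (1/6)·(⟨⟦u,v⟧,w⟩ + ⟨⟦v,w⟧,u⟩ + ⟨⟦w,u⟧,v⟩) ). In other words, the cyclic Jacobiator of the antisymmetrized bracket is D-exact, with primitive given by one sixth of the cyclic sum of pairings. (The identity underlying the paper's Roytenberg–Weinstein local L∞ algebra, whose 3-ary bracket is μ₃(ξ₁,ξ₂,ξ₃) = −(1/6)(⟨⟦ξ₁,ξ₂⟧,ξ₃⟩ + cyclic), and the proof of the classical master equation for the Courant contact model.) -/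
import Mathlib


/-- The antisymmetrized (Courant) bracket `⟦u,v⟧ = [u,v] - (1/2) • D ⟨u,v⟩`. -/
def acbr {k : Type*} [Field k] {O : Type*} [CommRing O] [Algebra k O]
    {E : Type*} [AddCommGroup E] [Module k E] [Module O E] [IsScalarTower k O E]
    (P : E →ₗ[O] E →ₗ[O] O) (br : E →ₗ[k] E →ₗ[k] E) (D : O →ₗ[k] E) (u v : E) : E :=
  br u v - (2 : k)⁻¹ • D (P u v)

theorem roytenberg_weinstein_jacobiator_identity
    {k : Type*} [Field k] [CharZero k] {O : Type*} [CommRing O] [Algebra k O]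
    {E : Type*} [AddCommGroup E] [Module k E] [Module O E] [IsScalarTower k O E]
    (P : E →ₗ[O] E →ₗ[O] O) (ρ : E →ₗ[O] Derivation k O O)
    (br : E →ₗ[k] E →ₗ[k] E) (D : O →ₗ[k] E)
    (hsymm : ∀ u v : E, P u v = P v u)
    (hPD : ∀ (u : E) (f : O), P u (D f) = ρ u f)
    (hLeib : ∀ (u v : E) (f : O), br u (f • v) = f • br u v + ρ u f • v)
    (hAnti : ∀ u v : E, br u v + br v u = D (P u v))
    (hCompat : ∀ u v w : E, ρ u (P v w) = P (br u v) w + P v (br u w))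
    (hJac : ∀ u v w : E, br u (br v w) = br (br u v) w + br v (br u w))
    (hsep : ∀ u : E, (∀ v : E, P u v = 0) → u = 0)
    (hfaith : ∀ f : O, (∀ w : E, f • w = 0) → f = 0) :
    ∀ u v w : E,
      acbr P br D (acbr P br D u v) w + acbr P br D (acbr P br D v w) u
          + acbr P br D (acbr P br D w u) v =
        D ((6 : k)⁻¹ •
          (P (acbr P br D u v) w + P (acbr P br D v w) u + P (acbr P br D w u) v)) := by
  have hPD' : ∀ (f : O) (x : E), P (D f) x = ρ x f := fun f x => (hsymm (D f) x).trans (hPD x f)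
  -- the anchor is a bracket homomorphism
  have ρbr : ∀ (u v : E) (f : O), ρ (br u v) f = ρ u (ρ v f) - ρ v (ρ u f) := by
    intro u v f
    have key : ∀ w : E, (ρ (br u v) f - (ρ u (ρ v f) - ρ v (ρ u f))) • w = 0 := by
      intro w
      have j := hJac u v (f • w)
      rw [hLeib v w f, hLeib u w f, map_add, map_add, hLeib u (br v w) f, hLeib u w (ρ v f),
        hLeib (br u v) w f, hLeib v (br u w) f, hLeib v w (ρ u f)] at j
      have j2 := congrArg (f • ·) (hJac u v w)
      simp only [smul_add] at j2
      linear_combination (norm := module) j2 - j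
    linear_combination hfaith _ key
  -- bracket with D on the right
  have brD : ∀ (u : E) (f : O), br u (D f) = D (ρ u f) := by
    intro u f
    have h0 : ∀ x : E, P (br u (D f) - D (ρ u f)) x = 0 := by
      intro x
      have hc := hCompat u (D f) x
      rw [hPD' f x, hPD' f (br u x)] at hc
      have hb := ρbr u x f
      simp only [map_sub, LinearMap.sub_apply, hPD' (ρ u f) x]
      linear_combination -hc - hb
    exact sub_eq_zero.mp (hsep _ h0)
  -- bracket with D on the left
  have brD0 : ∀ (f : O) (x : E), br (D f) x = 0 := by
    intro f x
    have ha := hAnti (D f) x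
    rw [brD x f, hPD' f x] at ha
    exact add_eq_right.mp ha
  intro u v w
  have k1 : br (br u v) w = br u (br v w) + br v (br w u) - D (ρ v (P w u)) := by
    have j := hJac u v w
    have e : br u w = D (P w u) - br w u := by
      rw [← hAnti w u]; abel
    rw [e, map_sub, brD v (P w u)] at j
    linear_combination (norm := module) -j
  have k2 : br (br v w) u = br v (br w u) + br w (br u v) - D (ρ w (P u v)) := by
    have j := hJac v w u
    have e : br v u = D (P u v) - br u v := by
      rw [← hAnti u v]; abel
    rw [e, map_sub, brD w (P u v)] at j
    linear_combination (norm := module) -j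
  have k3 : br (br w u) v = br w (br u v) + br u (br v w) - D (ρ u (P v w)) := by
    have j := hJac w u v
    have e : br w v = D (P v w) - br v w := by
      rw [← hAnti v w]; abel
    rw [e, map_sub, brD u (P v w)] at j
    linear_combination (norm := module) -j
  have k4 : (3 : k) • (br u (br v w) + br v (br w u) + br w (br u v)) =
      D (ρ v (P w u)) + D (ρ w (P u v)) + D (ρ u (P v w))
        + (D (P (br u v) w) + D (P (br v w) u) + D (P (br w u) v)) := by
    have t1 := hAnti u (br v w)
    rw [hsymm u (br v w)] at t1
    have t2 := hAnti v (br w u)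
    rw [hsymm v (br w u)] at t2
    have t3 := hAnti w (br u v)
    rw [hsymm w (br u v)] at t3
    linear_combination (norm := module) t1 + t2 + t3 - k1 - k2 - k3
  apply smul_right_injective E (show (12 : k) ≠ 0 by norm_num)
  show (12 : k) • _ = (12 : k) • _
  simp only [acbr, map_sub, map_smul, LinearMap.map_smul_of_tower, LinearMap.sub_apply,
    LinearMap.smul_apply, map_add, brD0, smul_zero, zero_sub, sub_zero, hPD']
  linear_combination (norm := module) (12 : k) • k1 + (12 : k) • k2 + (12 : k) • k3 + (8 : k) • k4
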